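/- Fix ν ≥ 0 and s ∈ [0,1). Then lim_{t↓0} ( h_{e^{−t}}(s) − s ) / t = (1 − s)( 1 + (ν/2)(1 − s) ). In other words, the right derivative at t = 0 of t ↦ h_{e^{−t}}(s) equals a(s) = (1−s)(1 + (ν/2)(1−s)), which is the generator term α(f(s) − s) with branching rate α = 1 + ν and offspring generating function f(s) = (1+ν)^{−1}(1 + ν/2 + (ν/2)s²). -/

import Mathlib

open Filter Finset

/-- The linear fractional generating function `h_a(s)` (with parameter ν). -/
noncomputable def h (ν a s : ℝ) : ℝ :=
  if s = 1 then 1 else 1 - a * (1/(1-s) + ν/2 * (1-a))⁻¹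

/-
With `c = 1/(1-s)`, the map `a ↦ h_a(s) = 1 - a (c + (ν/2)(1-a))⁻¹` is a smooth rational function
near `a = 1` with `h_1(s) = s` and derivative `-(1-s)(1 + (ν/2)(1-s))` there. The chain rule along
`a = e^{-t}` flips the sign, and the right limit of the difference quotient is this derivative.
-/

theorem h_of_ne_one (ν a : ℝ) {s : ℝ} (hs : s ≠ 1) :
    h ν a s = 1 - a * (1/(1-s) + ν/2 * (1-a))⁻¹ :=
  if_neg hs

theorem h_one_left (ν s : ℝ) : h ν 1 s = s := by
  by_cases hs : s = 1
  · simp [h, hs]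
  · rw [h_of_ne_one ν 1 hs]
    simp

theorem hasDerivAt_h_one (ν : ℝ) {s : ℝ} (hs : s ≠ 1) :
    HasDerivAt (fun a => h ν a s) (-((1 - s) * (1 + ν/2 * (1 - s)))) 1 := by
  have h1s : 1 - s ≠ 0 := sub_ne_zero.mpr (Ne.symm hs)
  have hden : HasDerivAt (fun a : ℝ => 1/(1-s) + ν/2 * (1-a)) (-(ν/2)) 1 := by
    simpa using ((hasDerivAt_id (1 : ℝ)).const_sub 1).const_mul (ν/2) |>.const_add (1/(1-s))
  have hden_one : 1/(1-s) + ν/2 * (1 - 1) ≠ 0 := by simpa using h1s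
  have hfun : HasDerivAt (fun a : ℝ => 1 - a * (1/(1-s) + ν/2 * (1-a))⁻¹)
      (-((1 - s) * (1 + ν/2 * (1 - s)))) 1 := by
    refine (((hasDerivAt_id (1 : ℝ)).mul (hden.inv hden_one)).const_sub 1).congr_deriv ?_
    simp only [id, Pi.inv_apply, sub_self, mul_zero, add_zero, one_div, inv_inv]
    field_simp
  exact hfun.congr_of_eventuallyEq (Eventually.of_forall fun a => h_of_ne_one ν a hs)

theorem hasDerivAt_h_exp_neg (ν : ℝ) {s : ℝ} (hs : s ≠ 1) :
    HasDerivAt (fun t => h ν (Real.exp (-t)) s) ((1 - s) * (1 + ν/2 * (1 - s))) 0 := by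
  have hexp : HasDerivAt (fun t : ℝ => Real.exp (-t)) (-1) 0 := by
    simpa using (hasDerivAt_neg (0 : ℝ)).exp
  have hh : HasDerivAt (fun a => h ν a s) (-((1 - s) * (1 + ν/2 * (1 - s)))) (Real.exp (-0)) := by
    simpa using hasDerivAt_h_one ν hs
  have hcomp := hh.comp 0 hexp
  rw [mul_neg_one, neg_neg] at hcomp
  exact hcomp

theorem stmt18_general (ν : ℝ) (s : ℝ) (hs : s ∈ Set.Ico (0 : ℝ) 1) :
    Tendsto (fun t : ℝ => (h ν (Real.exp (-t)) s - s) / t) (nhdsWithin 0 (Set.Ioi 0))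
      (nhds ((1 - s) * (1 + ν/2 * (1 - s)))) := by
  have hslope := (hasDerivAt_h_exp_neg ν hs.2.ne).tendsto_slope_zero_right
  simpa [h_one_left, div_eq_inv_mul] using hslope

theorem stmt18 (ν : ℝ) (hν : 0 ≤ ν) (s : ℝ) (hs : s ∈ Set.Ico (0 : ℝ) 1) :
    Tendsto (fun t : ℝ => (h ν (Real.exp (-t)) s - s) / t) (nhdsWithin 0 (Set.Ioi 0))
      (nhds ((1 - s) * (1 + ν/2 * (1 - s)))) :=
  stmt18_general ν s hs
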